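/- Let S be a 0-simplifying Tarski monoid and let e be any non-zero idempotent of S. Then there exist infinitesimals a, b ∈ eSe such that a⁻¹a = bb⁻¹ (the product ab is a restricted product) and ab is itself an infinitesimal. -/

import Mathlib

universe u

/-- An inverse monoid with zero: every element `a` has a unique generalized
inverse `a⁻¹`, and `0` is an absorbing element. -/
class InverseMonoidWithZero (S : Type u) extends Monoid S, Zero S, Inv S where
  zero_mul' : ∀ a : S, 0 * a = 0
  mul_zero' : ∀ a : S, a * 0 = 0
  mul_inv_mul : ∀ a : S, a * a⁻¹ * a = a
  inv_mul_inv : ∀ a : S, a⁻¹ * a * a⁻¹ = a⁻¹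
  inv_unique : ∀ a b : S, a * b * a = a → b * a * b = b → b = a⁻¹

section BasicDefs

variable {S : Type u}

/-- The natural partial order: `a ≤ b` iff `a = e * b` for some idempotent `e`. -/
def nle [InverseMonoidWithZero S] (a b : S) : Prop :=
  ∃ e : S, e * e = e ∧ a = e * b

/-- `a` and `b` are compatible if `a * b⁻¹` and `a⁻¹ * b` are idempotents. -/
def Compat [InverseMonoidWithZero S] (a b : S) : Prop :=
  (a * b⁻¹) * (a * b⁻¹) = a * b⁻¹ ∧ (a⁻¹ * b) * (a⁻¹ * b) = a⁻¹ * b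

/-- `a` and `b` are orthogonal if `a * b⁻¹ = 0` and `a⁻¹ * b = 0`. -/
def Orth [InverseMonoidWithZero S] (a b : S) : Prop :=
  a * b⁻¹ = 0 ∧ a⁻¹ * b = 0

end BasicDefs

/-- A distributive inverse monoid: every compatible pair has a join (for the
natural partial order), recorded by `sup`, and multiplication distributes over
these binary joins. -/
class DistributiveInverseMonoid (S : Type u) extends InverseMonoidWithZero S where
  sup : S → S → S
  le_sup_left : ∀ a b : S, Compat a b → nle a (sup a b)
  le_sup_right : ∀ a b : S, Compat a b → nle b (sup a b)
  sup_le : ∀ a b c : S, Compat a b → nle a c → nle b c → nle (sup a b) c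
  mul_sup : ∀ a b c : S, Compat a b → c * sup a b = sup (c * a) (c * b)
  sup_mul : ∀ a b c : S, Compat a b → sup a b * c = sup (a * c) (b * c)

/-- A Boolean inverse monoid: a distributive inverse monoid whose idempotents
form a Boolean algebra under the natural partial order; `compl` records the
complementation on idempotents. -/
class BooleanInverseMonoid (S : Type u) extends DistributiveInverseMonoid S where
  compl : S → S
  compl_idem : ∀ e : S, e * e = e → compl e * compl e = compl e
  mul_compl : ∀ e : S, e * e = e → e * compl e = 0
  sup_compl : ∀ e : S, e * e = e → sup e (compl e) = 1

/-- A Boolean inverse ∧-monoid: a Boolean inverse monoid in which every pair of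
elements has a meet with respect to the natural partial order. -/
class BooleanInverseMeetMonoid (S : Type u) extends BooleanInverseMonoid S where
  inf : S → S → S
  inf_le_left : ∀ a b : S, nle (inf a b) a
  inf_le_right : ∀ a b : S, nle (inf a b) b
  le_inf : ∀ a b c : S, nle c a → nle c b → nle c (inf a b)

section MoreDefs

variable {S : Type u}

/-- The join of a compatible pair. -/
def bsup [DistributiveInverseMonoid S] (a b : S) : S := DistributiveInverseMonoid.sup a b

/-- Complementation in the Boolean algebra of idempotents. -/
def bcompl [BooleanInverseMonoid S] (e : S) : S := BooleanInverseMonoid.compl e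

/-- The binary meet. -/
def binf [BooleanInverseMeetMonoid S] (a b : S) : S := BooleanInverseMeetMonoid.inf a b

/-- The fixed-point operator `φ(s) = s ∧ 1`. -/
def phi [BooleanInverseMeetMonoid S] (s : S) : S := binf s 1

/-- The support operator `σ(s) = \overline{φ(s)} ⋅ s⁻¹ s`. -/
def sigma [BooleanInverseMeetMonoid S] (s : S) : S := bcompl (phi s) * (s⁻¹ * s)

/-- An infinitesimal is a non-zero element that squares to zero. -/
def Infinitesimal [InverseMonoidWithZero S] (a : S) : Prop := a ≠ 0 ∧ a * a = 0

/-- A (two-sided) ideal. -/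
def IsMIdeal [InverseMonoidWithZero S] (I : Set S) : Prop :=
  I.Nonempty ∧ ∀ a ∈ I, ∀ s : S, s * a ∈ I ∧ a * s ∈ I

/-- A ∨-ideal: an ideal closed under joins of compatible pairs. -/
def IsVIdeal [DistributiveInverseMonoid S] (I : Set S) : Prop :=
  IsMIdeal I ∧ ∀ a ∈ I, ∀ b ∈ I, Compat a b → bsup a b ∈ I

end MoreDefs

/-- 0-simplifying: the only ∨-ideals are `{0}` and `S`. -/
def ZeroSimplifying (S : Type u) [DistributiveInverseMonoid S] : Prop :=
  ∀ I : Set S, IsVIdeal I → I = {0} ∨ I = Set.univ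

/-- 0-simple: non-trivial and the only ideals are `{0}` and `S`. -/
def ZeroSimple (S : Type u) [InverseMonoidWithZero S] : Prop :=
  (∃ s : S, s ≠ 0) ∧ ∀ I : Set S, IsMIdeal I → I = {0} ∨ I = Set.univ

/-- Fundamental: every element commuting with all idempotents is an idempotent. -/
def Fundamental (S : Type u) [InverseMonoidWithZero S] : Prop :=
  ∀ a : S, (∀ e : S, e * e = e → a * e = e * a) → a * a = a

/-- The Boolean algebra of idempotents is atomless. -/
def IdemAtomless (S : Type u) [InverseMonoidWithZero S] : Prop :=
  ∀ e : S, e * e = e → e ≠ 0 → ∃ f : S, f * f = f ∧ f ≠ 0 ∧ nle f e ∧ f ≠ e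

section Filters

variable {S : Type u}

/-- A filter in a Boolean inverse ∧-monoid: a nonempty subset closed under
binary meets and upward closed in the natural partial order. -/
def IsMFilter [BooleanInverseMeetMonoid S] (A : Set S) : Prop :=
  A.Nonempty ∧ (∀ a ∈ A, ∀ b ∈ A, binf a b ∈ A) ∧ ∀ a ∈ A, ∀ b : S, nle a b → b ∈ A

/-- An ultrafilter: a maximal proper filter. -/
def IsMUltrafilter [BooleanInverseMeetMonoid S] (A : Set S) : Prop :=
  IsMFilter A ∧ (0 : S) ∉ A ∧ ∀ B : Set S, IsMFilter B → (0 : S) ∉ B → A ⊆ B → A = B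

/-- A filter of the Boolean algebra of idempotents (meet of idempotents is
their product). -/
def IsIdemFilter [InverseMonoidWithZero S] (F : Set S) : Prop :=
  F.Nonempty ∧ (∀ e ∈ F, e * e = e) ∧ (∀ e ∈ F, ∀ f ∈ F, e * f ∈ F) ∧
    ∀ e ∈ F, ∀ f : S, f * f = f → nle e f → f ∈ F

/-- An ultrafilter of the Boolean algebra of idempotents. -/
def IsIdemUltrafilter [InverseMonoidWithZero S] (F : Set S) : Prop :=
  IsIdemFilter F ∧ (0 : S) ∉ F ∧
    ∀ G : Set S, IsIdemFilter G → (0 : S) ∉ G → F ⊆ G → F = G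

end Filters

section PencilDefs

variable {S : Type u}

/-- `Preceq e f`: there is a pencil from `e` to `f`, i.e. finitely many
elements `x₁, …, xₘ` with `r(xᵢ) ≤ f` for all `i` and `e = ⋁ d(xᵢ)`
(a least upper bound for the natural partial order). -/
def Preceq [DistributiveInverseMonoid S] (e f : S) : Prop :=
  ∃ l : List S, l ≠ [] ∧ (∀ x ∈ l, nle (x * x⁻¹) f) ∧
    (∀ x ∈ l, nle (x⁻¹ * x) e) ∧ ∀ c : S, (∀ x ∈ l, nle (x⁻¹ * x) c) → nle e c

/-- Piecewise factorizable: every element is a finite join of elements each of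
which lies beneath a unit. -/
def PiecewiseFactorizable (S : Type u) [DistributiveInverseMonoid S] : Prop :=
  ∀ s : S, ∃ l : List S, l ≠ [] ∧ (∀ x ∈ l, ∃ g : S, IsUnit g ∧ nle x g) ∧
    (∀ x ∈ l, nle x s) ∧ ∀ c : S, (∀ x ∈ l, nle x c) → nle s c

/-- A properly infinite idempotent. -/
def ProperlyInfinite [DistributiveInverseMonoid S] (e : S) : Prop :=
  ∃ x y : S, x⁻¹ * x = e ∧ y⁻¹ * y = e ∧ Orth (x * x⁻¹) (y * y⁻¹) ∧
    nle (bsup (x * x⁻¹) (y * y⁻¹)) e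

end PencilDefs

/-- Purely infinite: every non-zero idempotent is properly infinite. -/
def PurelyInfinite (S : Type u) [DistributiveInverseMonoid S] : Prop :=
  ∀ e : S, e * e = e → e ≠ 0 → ProperlyInfinite e

/-!
Atomlessness splits `e` into three mutually orthogonal non-zero idempotents `p, q, r ≤ e`.
For `b ≠ 0` the elements `s` with `sSb = 0` form a proper `∨`-ideal, so in a 0-simplifying monoid
every corner `fSg` between non-zero idempotents contains a non-zero element. Take `0 ≠ x ∈ pSq`
and `0 ≠ y ∈ x⁻¹x S r`. Then `a = x y y⁻¹ ∈ pSq`, `b = y ∈ qSr` and `ab = xy ∈ pSr` square to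
zero by orthogonality, `a⁻¹a = yy⁻¹ = bb⁻¹`, and `xy ≠ 0` because `x⁻¹(xy) = y`.
-/

namespace InverseMonoidWithZero

variable {S : Type u} [InverseMonoidWithZero S]

theorem inv_inv (a : S) : a⁻¹⁻¹ = a :=
  (inv_unique a⁻¹ a (inv_mul_inv a) (mul_inv_mul a)).symm

theorem inv_eq_self_of_isIdempotentElem {e : S} (he : IsIdempotentElem e) : e⁻¹ = e :=
  (inv_unique e e (by rw [he.eq, he.eq]) (by rw [he.eq, he.eq])).symm

theorem isIdempotentElem_zero : IsIdempotentElem (0 : S) := zero_mul' 0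

theorem isIdempotentElem_inv_mul_self (a : S) : IsIdempotentElem (a⁻¹ * a) := by
  rw [IsIdempotentElem, ← mul_assoc, inv_mul_inv]

theorem isIdempotentElem_mul_inv_self (a : S) : IsIdempotentElem (a * a⁻¹) := by
  rw [IsIdempotentElem, ← mul_assoc, mul_inv_mul]

/-- The inverse of `e * f` is forced to be `f * (e * f)⁻¹ * e`, which squares to itself. -/
theorem isIdempotentElem_mul {e f : S} (he : IsIdempotentElem e) (hf : IsIdempotentElem f) :
    IsIdempotentElem (e * f) := by
  have hinv : f * (e * f)⁻¹ * e = (e * f)⁻¹ := by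
    refine inv_unique (e * f) _ ?_ ?_
    · calc e * f * (f * (e * f)⁻¹ * e) * (e * f) = e * (f * f) * (e * f)⁻¹ * ((e * e) * f) := by
            simp only [mul_assoc]
        _ = e * f := by rw [hf.eq, he.eq, mul_inv_mul]
    · calc f * (e * f)⁻¹ * e * (e * f) * (f * (e * f)⁻¹ * e)
            = f * ((e * f)⁻¹ * ((e * e) * (f * f)) * (e * f)⁻¹) * e := by simp only [mul_assoc]
        _ = f * (e * f)⁻¹ * e := by rw [he.eq, hf.eq, inv_mul_inv]
  have hidem : IsIdempotentElem (e * f)⁻¹ :=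
    calc (e * f)⁻¹ * (e * f)⁻¹ = f * (e * f)⁻¹ * e * (f * (e * f)⁻¹ * e) := by rw [hinv]
      _ = f * ((e * f)⁻¹ * (e * f) * (e * f)⁻¹) * e := by simp only [mul_assoc]
      _ = (e * f)⁻¹ := by rw [inv_mul_inv, hinv]
  have h := inv_eq_self_of_isIdempotentElem hidem
  rw [inv_inv] at h
  rwa [h]

theorem commute_of_isIdempotentElem {e f : S} (he : IsIdempotentElem e)
    (hf : IsIdempotentElem f) : Commute e f := by
  have hef := isIdempotentElem_mul he hf
  have hfe := isIdempotentElem_mul hf he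
  have h : f * e = (e * f)⁻¹ := by
    refine inv_unique (e * f) (f * e) ?_ ?_
    · calc e * f * (f * e) * (e * f) = e * (f * f) * ((e * e) * f) := by simp only [mul_assoc]
        _ = e * f := by rw [hf.eq, he.eq, hef.eq]
    · calc f * e * (e * f) * (f * e) = f * (e * e) * ((f * f) * e) := by simp only [mul_assoc]
        _ = f * e := by rw [he.eq, hf.eq, hfe.eq]
  rw [Commute, SemiconjBy, h, inv_eq_self_of_isIdempotentElem hef]

theorem mul_inv_rev (a b : S) : (a * b)⁻¹ = b⁻¹ * a⁻¹ := by
  have hcomm := (commute_of_isIdempotentElem (isIdempotentElem_mul_inv_self b)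
    (isIdempotentElem_inv_mul_self a)).eq
  refine (inv_unique (a * b) (b⁻¹ * a⁻¹) ?_ ?_).symm
  · calc a * b * (b⁻¹ * a⁻¹) * (a * b) = a * ((b * b⁻¹) * (a⁻¹ * a)) * b := by
          simp only [mul_assoc]
      _ = (a * a⁻¹ * a) * (b * b⁻¹ * b) := by rw [hcomm]; simp only [mul_assoc]
      _ = a * b := by rw [mul_inv_mul, mul_inv_mul]
  · calc b⁻¹ * a⁻¹ * (a * b) * (b⁻¹ * a⁻¹) = b⁻¹ * ((a⁻¹ * a) * (b * b⁻¹)) * a⁻¹ := by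
          simp only [mul_assoc]
      _ = (b⁻¹ * b * b⁻¹) * (a⁻¹ * a * a⁻¹) := by rw [← hcomm]; simp only [mul_assoc]
      _ = b⁻¹ * a⁻¹ := by rw [inv_mul_inv, inv_mul_inv]

theorem inv_mul_self_ne_zero {a : S} (ha : a ≠ 0) : a⁻¹ * a ≠ 0 := by
  intro h
  apply ha
  rw [← mul_inv_mul a, mul_assoc, h, mul_zero']

theorem mul_eq_of_nle {a b : S} (h : nle a b) (hb : IsIdempotentElem b) : a * b = a := by
  obtain ⟨u, -, rfl⟩ := h
  rw [mul_assoc, hb.eq]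

/-- For idempotents `p`, `q` this says `a ∈ pSq`. -/
def MemCorner (p q a : S) : Prop := p * a = a ∧ a * q = a

theorem MemCorner.mul {p q q' r a b : S} (ha : MemCorner p q a) (hb : MemCorner q' r b) :
    MemCorner p r (a * b) :=
  ⟨by rw [← mul_assoc, ha.1], by rw [mul_assoc, hb.2]⟩

theorem MemCorner.inv {p q a : S} (hp : IsIdempotentElem p) (hq : IsIdempotentElem q)
    (ha : MemCorner p q a) : MemCorner q p a⁻¹ := by
  have hl : (a * q)⁻¹ = q * a⁻¹ := by rw [mul_inv_rev, inv_eq_self_of_isIdempotentElem hq]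
  have hr : (p * a)⁻¹ = a⁻¹ * p := by rw [mul_inv_rev, inv_eq_self_of_isIdempotentElem hp]
  rw [ha.2] at hl
  rw [ha.1] at hr
  exact ⟨hl.symm, hr.symm⟩

theorem MemCorner.mul_self_eq_zero {p q a : S} (ha : MemCorner p q a) (hqp : q * p = 0) :
    a * a = 0 :=
  calc a * a = a * q * (p * a) := by rw [ha.2, ha.1]
    _ = a * (q * p) * a := by simp only [mul_assoc]
    _ = 0 := by rw [hqp, mul_zero', zero_mul']

theorem MemCorner.of_mul_left {p u q b : S} (hu : MemCorner p p u) (hb : MemCorner u q b) :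
    MemCorner p q b := by
  simpa only [hb.1] using hu.mul hb

theorem MemCorner.mono {p q e a : S} (ha : MemCorner p q a) (hp : MemCorner e e p)
    (hq : MemCorner e e q) : MemCorner e e a := by
  simpa only [ha.1, ha.2] using (hp.mul ha).mul hq

theorem memCorner_of_mul_eq {e f : S} (he : IsIdempotentElem e) (hf : IsIdempotentElem f)
    (h : f * e = f) : MemCorner e e f :=
  ⟨by rw [(commute_of_isIdempotentElem he hf).eq, h], h⟩

theorem MemCorner.exists_eq_mul_mul {e a : S} (ha : MemCorner e e a) : ∃ s, a = e * s * e :=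
  ⟨a, by rw [ha.1, ha.2]⟩

theorem exists_infinitesimal_restricted_pair {p q r x y : S} (hp : IsIdempotentElem p)
    (hq : IsIdempotentElem q) (hr : IsIdempotentElem r) (hqp : q * p = 0) (hrq : r * q = 0)
    (hrp : r * p = 0) (hx : MemCorner p q x) (hy : MemCorner (x⁻¹ * x) r y) (hy0 : y ≠ 0) :
    ∃ a b : S, Infinitesimal a ∧ Infinitesimal b ∧ MemCorner p q a ∧ MemCorner q r b ∧
      a⁻¹ * a = b * b⁻¹ ∧ Infinitesimal (a * b) := by
  have hyqr : MemCorner q r y := ((hx.inv hp hq).mul hx).of_mul_left hy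
  have hyy : MemCorner q q (y * y⁻¹) := hyqr.mul (hyqr.inv hq hr)
  have hab : x * (y * y⁻¹) * y = x * y := by rw [mul_assoc, mul_inv_mul]
  have hxy0 : x * y ≠ 0 := fun h => hy0 (by rw [← hy.1, mul_assoc, h, mul_zero'])
  have hdom : (x * (y * y⁻¹))⁻¹ * (x * (y * y⁻¹)) = y * y⁻¹ :=
    calc (x * (y * y⁻¹))⁻¹ * (x * (y * y⁻¹)) = y * y⁻¹ * (x⁻¹ * x * y) * y⁻¹ := by
          rw [mul_inv_rev, inv_eq_self_of_isIdempotentElem (isIdempotentElem_mul_inv_self y)]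
          simp only [mul_assoc]
      _ = y * y⁻¹ := by rw [hy.1, mul_inv_mul]
  refine ⟨x * (y * y⁻¹), y, ⟨fun h => hxy0 ?_, (hx.mul hyy).mul_self_eq_zero hqp⟩,
    ⟨hy0, hyqr.mul_self_eq_zero hrq⟩, hx.mul hyy, hyqr, hdom, ?_⟩
  · rw [← hab, h, zero_mul']
  · rw [hab]
    exact ⟨hxy0, (hx.mul hyqr).mul_self_eq_zero hrp⟩

end InverseMonoidWithZero

open InverseMonoidWithZero

section Distributive

variable {S : Type u} [DistributiveInverseMonoid S]

theorem DistributiveInverseMonoid.compat_of_isIdempotentElem {e f : S}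
    (he : IsIdempotentElem e) (hf : IsIdempotentElem f) : Compat e f := by
  rw [Compat, inv_eq_self_of_isIdempotentElem he, inv_eq_self_of_isIdempotentElem hf]
  exact ⟨isIdempotentElem_mul he hf, isIdempotentElem_mul he hf⟩

theorem DistributiveInverseMonoid.sup_zero_zero : sup (0 : S) 0 = 0 := by
  have h0 : nle (0 : S) 0 := ⟨0, isIdempotentElem_zero, (zero_mul' 0).symm⟩
  obtain ⟨u, -, h⟩ := sup_le 0 0 0
    (compat_of_isIdempotentElem isIdempotentElem_zero isIdempotentElem_zero) h0 h0
  rw [h, mul_zero']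

theorem ZeroSimplifying.exists_mul_mul_ne_zero (h0 : ZeroSimplifying S) {a b : S} (ha : a ≠ 0)
    (hb : b ≠ 0) : ∃ t, a * t * b ≠ 0 := by
  by_contra! hab
  set I : Set S := {s | ∀ t, s * (t * b) = 0}
  have hIv : IsVIdeal I := by
    refine ⟨⟨⟨0, fun t => zero_mul' _⟩, fun s hs x => ⟨fun t => ?_, fun t => ?_⟩⟩,
      fun s hs s' hs' hc t => ?_⟩
    · rw [mul_assoc, hs, mul_zero']
    · rw [mul_assoc, ← mul_assoc x, hs]
    · rw [bsup, DistributiveInverseMonoid.sup_mul _ _ _ hc, hs, hs',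
        DistributiveInverseMonoid.sup_zero_zero]
  rcases h0 I hIv with h | h
  · have haI : a ∈ I := fun t => by rw [← mul_assoc]; exact hab t
    rw [h] at haI
    exact ha haI
  · have h1I : (1 : S) ∈ I := h ▸ Set.mem_univ 1
    exact hb (by simpa using h1I 1)

theorem ZeroSimplifying.exists_memCorner_ne_zero (h0 : ZeroSimplifying S) {p q : S}
    (hp : IsIdempotentElem p) (hq : IsIdempotentElem q) (hp0 : p ≠ 0) (hq0 : q ≠ 0) :
    ∃ x, x ≠ 0 ∧ MemCorner p q x := by
  obtain ⟨t, ht⟩ := h0.exists_mul_mul_ne_zero hp0 hq0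
  exact ⟨p * t * q, ht, by rw [← mul_assoc, ← mul_assoc, hp.eq], by rw [mul_assoc, hq.eq]⟩

end Distributive

section Boolean

variable {S : Type u} [BooleanInverseMonoid S]

/-- If `e * compl f` vanished, distributivity would give `e = e * (f ∨ compl f) = f ∨ 0 ≤ f`. -/
theorem IdemAtomless.exists_split (hat : IdemAtomless S) {e : S} (he : IsIdempotentElem e)
    (hne : e ≠ 0) : ∃ f g : S, IsIdempotentElem f ∧ IsIdempotentElem g ∧ f ≠ 0 ∧ g ≠ 0 ∧
      g * f = 0 ∧ f * e = f ∧ g * e = g := by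
  obtain ⟨f, hf, hf0, hfle, hfne⟩ := hat e he hne
  have hfe : f * e = f := mul_eq_of_nle hfle he
  have hc : IsIdempotentElem (BooleanInverseMonoid.compl f) := BooleanInverseMonoid.compl_idem f hf
  have hfc := DistributiveInverseMonoid.compat_of_isIdempotentElem hf hc
  refine ⟨f, e * BooleanInverseMonoid.compl f, hf, isIdempotentElem_mul he hc, hf0,
    fun hec => hfne ?_, ?_, hfe, ?_⟩
  · have hsup : e = DistributiveInverseMonoid.sup f 0 := by
      conv_lhs => rw [← mul_one e, ← BooleanInverseMonoid.sup_compl f hf,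
        DistributiveInverseMonoid.mul_sup _ _ _ hfc, (commute_of_isIdempotentElem he hf).eq, hfe,
        hec]
    have hef : e * f = e := mul_eq_of_nle (hsup ▸ DistributiveInverseMonoid.sup_le f 0 f
      (DistributiveInverseMonoid.compat_of_isIdempotentElem hf isIdempotentElem_zero)
      ⟨f, hf, hf.symm⟩ ⟨0, isIdempotentElem_zero, (zero_mul' f).symm⟩) hf
    rw [← hfe, ← (commute_of_isIdempotentElem he hf).eq, hef]
  · rw [mul_assoc, ← (commute_of_isIdempotentElem hf hc).eq, BooleanInverseMonoid.mul_compl f hf,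
      mul_zero']
  · rw [mul_assoc, (commute_of_isIdempotentElem hc he).eq, ← mul_assoc, he.eq]

theorem IdemAtomless.exists_three_orthogonal (hat : IdemAtomless S) {e : S}
    (he : IsIdempotentElem e) (hne : e ≠ 0) :
    ∃ p q r : S, IsIdempotentElem p ∧ IsIdempotentElem q ∧ IsIdempotentElem r ∧
      p ≠ 0 ∧ q ≠ 0 ∧ r ≠ 0 ∧ q * p = 0 ∧ r * q = 0 ∧ r * p = 0 ∧
      MemCorner e e p ∧ MemCorner e e q ∧ MemCorner e e r := by
  obtain ⟨p, g, hp, hg, hp0, hg0, hgp, hpe, hge⟩ := hat.exists_split he hne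
  obtain ⟨q, r, hq, hr, hq0, hr0, hrq, hqg, hrg⟩ := hat.exists_split hg hg0
  have hunder : ∀ {f : S}, f * g = f → f * p = 0 ∧ f * e = f := fun hf =>
    ⟨by rw [← hf, mul_assoc, hgp, mul_zero'], by rw [← hf, mul_assoc, hge]⟩
  exact ⟨p, q, r, hp, hq, hr, hp0, hq0, hr0, (hunder hqg).1, hrq, (hunder hrg).1,
    memCorner_of_mul_eq he hp hpe, memCorner_of_mul_eq he hq (hunder hqg).2,
    memCorner_of_mul_eq he hr (hunder hrg).2⟩

end Boolean

theorem statement8_general (S : Type u) [BooleanInverseMeetMonoid S]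
    (hat : IdemAtomless S) (h0 : ZeroSimplifying S)
    (e : S) (he : e * e = e) (hne : e ≠ 0) :
    ∃ a b : S, Infinitesimal a ∧ Infinitesimal b ∧
      (∃ s : S, a = e * s * e) ∧ (∃ s : S, b = e * s * e) ∧
      a⁻¹ * a = b * b⁻¹ ∧ Infinitesimal (a * b) := by
  obtain ⟨p, q, r, hp, hq, hr, hp0, hq0, hr0, hqp, hrq, hrp, hpe, hqe, hre⟩ :=
    hat.exists_three_orthogonal he hne
  obtain ⟨x, hx0, hx⟩ := h0.exists_memCorner_ne_zero hp hq hp0 hq0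
  obtain ⟨y, hy0, hy⟩ := h0.exists_memCorner_ne_zero (isIdempotentElem_inv_mul_self x) hr
    (inv_mul_self_ne_zero hx0) hr0
  obtain ⟨a, b, ha, hb, hapq, hbqr, hab, habi⟩ :=
    exists_infinitesimal_restricted_pair hp hq hr hqp hrq hrp hx hy hy0
  exact ⟨a, b, ha, hb, (hapq.mono hpe hqe).exists_eq_mul_mul, (hbqr.mono hqe hre).exists_eq_mul_mul,
    hab, habi⟩

/-- In a 0-simplifying Tarski monoid, for every non-zero
idempotent `e` there are infinitesimals `a, b ∈ eSe` such that `ab` is a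
restricted product (`a⁻¹a = bb⁻¹`) and `ab` is an infinitesimal. -/
theorem statement8 (S : Type u) [BooleanInverseMeetMonoid S] [Countable S]
    (hat : IdemAtomless S) (h0 : ZeroSimplifying S)
    (e : S) (he : e * e = e) (hne : e ≠ 0) :
    ∃ a b : S, Infinitesimal a ∧ Infinitesimal b ∧
      (∃ s : S, a = e * s * e) ∧ (∃ s : S, b = e * s * e) ∧
      a⁻¹ * a = b * b⁻¹ ∧ Infinitesimal (a * b) :=
  statement8_general S hat h0 e he hne
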